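/- arXiv:0908.0083 — 3 statements merged into one kernel-verified Lean document; each statement's English description precedes it below -/
import Mathlib

section
/- Let (C,Δ,ε,σ) be a Yang–Baxter coalgebra and 1_C a group-like element of C such that σ(1_C ⊗ x) = x ⊗ 1_C and σ(x ⊗ 1_C) = 1_C ⊗ x for all x ∈ C. Define the reduced coproduct Δ̄(x) = Δ(x) − x⊗1_C − 1_C⊗x. Then (id⊗Δ̄)σ = σ₁σ₂(Δ̄⊗id) and (Δ̄⊗id)σ = σ₂σ₁(id⊗Δ̄). -/
open TensorProduct
noncomputable section
variable {K : Type*} [Field K] [CharZero K] {C : Type*} [AddCommGroup C] [Module K C]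

/-- `σ ⊗ id` on `C ⊗ (C ⊗ C)`. -/
def sOne (σ : C ⊗[K] C →ₗ[K] C ⊗[K] C) : C ⊗[K] (C ⊗[K] C) →ₗ[K] C ⊗[K] (C ⊗[K] C) :=
  (TensorProduct.assoc K C C C).toLinearMap ∘ₗ LinearMap.rTensor C σ ∘ₗ
    (TensorProduct.assoc K C C C).symm.toLinearMap

/-- `id ⊗ σ` on `C ⊗ (C ⊗ C)`. -/
def sTwo (σ : C ⊗[K] C →ₗ[K] C ⊗[K] C) : C ⊗[K] (C ⊗[K] C) →ₗ[K] C ⊗[K] (C ⊗[K] C) :=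
  LinearMap.lTensor C σ

/-- `D ⊗ id` on `C ⊗ C` (normalized to land in `C ⊗ (C ⊗ C)`). -/
def dOne (D : C →ₗ[K] C ⊗[K] C) : C ⊗[K] C →ₗ[K] C ⊗[K] (C ⊗[K] C) :=
  (TensorProduct.assoc K C C C).toLinearMap ∘ₗ LinearMap.rTensor C D

/-- `id ⊗ D` on `C ⊗ C`. -/
def dTwo (D : C →ₗ[K] C ⊗[K] C) : C ⊗[K] C →ₗ[K] C ⊗[K] (C ⊗[K] C) :=
  LinearMap.lTensor C D

/-- `ε ⊗ id` on `C ⊗ C` (normalized to land in `C`). -/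
def eOne (ε : C →ₗ[K] K) : C ⊗[K] C →ₗ[K] C :=
  (TensorProduct.lid K C).toLinearMap ∘ₗ LinearMap.rTensor C ε

/-- `id ⊗ ε` on `C ⊗ C` (normalized to land in `C`). -/
def eTwo (ε : C →ₗ[K] K) : C ⊗[K] C →ₗ[K] C :=
  (TensorProduct.rid K C).toLinearMap ∘ₗ LinearMap.lTensor C ε

/-- the reduced coproduct `Δ̄ x = Δ x - x ⊗ 1 - 1 ⊗ x`. -/
def redCop (D : C →ₗ[K] C ⊗[K] C) (one : C) : C →ₗ[K] C ⊗[K] C :=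
  D - (TensorProduct.mk K C C).flip one - TensorProduct.mk K C C one

theorem stmt2 (D : C →ₗ[K] C ⊗[K] C) (ε : C →ₗ[K] K) (σ : C ⊗[K] C →ₗ[K] C ⊗[K] C)
    (oneC : C)
    -- coalgebra axioms
    (hco : dOne D ∘ₗ D = dTwo D ∘ₗ D)
    (hcl : eOne ε ∘ₗ D = LinearMap.id) (hcr : eTwo ε ∘ₗ D = LinearMap.id)
    -- Yang–Baxter coalgebra axioms
    (hbij : Function.Bijective σ)
    (hYB : sOne σ ∘ₗ sTwo σ ∘ₗ sOne σ = sTwo σ ∘ₗ sOne σ ∘ₗ sTwo σ)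
    (hy1 : sOne σ ∘ₗ sTwo σ ∘ₗ dOne D = dTwo D ∘ₗ σ)
    (hy2 : sTwo σ ∘ₗ sOne σ ∘ₗ dTwo D = dOne D ∘ₗ σ)
    (he1 : eTwo ε ∘ₗ σ = eOne ε) (he2 : eOne ε ∘ₗ σ = eTwo ε)
    -- group-like element
    (hgl : D oneC = oneC ⊗ₜ[K] oneC) (hge : ε oneC = 1)
    (hs1 : ∀ x : C, σ (oneC ⊗ₜ[K] x) = x ⊗ₜ[K] oneC)
    (hs2 : ∀ x : C, σ (x ⊗ₜ[K] oneC) = oneC ⊗ₜ[K] x) :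
    dTwo (redCop D oneC) ∘ₗ σ = sOne σ ∘ₗ sTwo σ ∘ₗ dOne (redCop D oneC) ∧
    dOne (redCop D oneC) ∘ₗ σ = sTwo σ ∘ₗ sOne σ ∘ₗ dTwo (redCop D oneC) := by
  set R : C →ₗ[K] C ⊗[K] C := (TensorProduct.mk K C C).flip oneC with hR
  set L : C →ₗ[K] C ⊗[K] C := TensorProduct.mk K C C oneC with hL
  -- pointwise formulas
  have hA : ∀ u : C ⊗[K] C, dTwo (K := K) R u = (TensorProduct.assoc K C C C) (u ⊗ₜ[K] oneC) := by
    intro u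
    induction u using TensorProduct.induction_on with
    | zero => simp [dTwo]
    | tmul x y => simp [dTwo, hR]
    | add a b ha hb => simp [add_tmul, ha, hb, map_add]
  have hD : ∀ u : C ⊗[K] C, dOne (K := K) L u = oneC ⊗ₜ[K] u := by
    intro u
    induction u using TensorProduct.induction_on with
    | zero => simp [dOne]
    | tmul x y => simp [dOne, hL]
    | add a b ha hb => simp [tmul_add, ha, hb, map_add]
  have hB : ∀ u : C ⊗[K] C, sOne σ (oneC ⊗ₜ[K] u) = dTwo (K := K) L u := by
    intro u
    induction u using TensorProduct.induction_on with
    | zero => simp [sOne, dTwo]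
    | tmul x y => simp [sOne, dTwo, hL, hs1]
    | add a b ha hb => simp [tmul_add, ha, hb, map_add]
  have hCc : ∀ u : C ⊗[K] C,
      sTwo σ ((TensorProduct.assoc K C C C) (u ⊗ₜ[K] oneC)) = dOne (K := K) R u := by
    intro u
    induction u using TensorProduct.induction_on with
    | zero => simp [sTwo, dOne]
    | tmul x y => simp [sTwo, dOne, hR, hs2]
    | add a b ha hb => simp [add_tmul, ha, hb, map_add]
  -- the four term claims
  have c1 : sOne σ ∘ₗ sTwo σ ∘ₗ dOne (K := K) R = dTwo (K := K) R ∘ₗ σ := by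
    apply TensorProduct.ext'
    intro x y
    have : sTwo σ (dOne (K := K) R (x ⊗ₜ[K] y)) = x ⊗ₜ[K] (y ⊗ₜ[K] oneC) := by
      simp [dOne, sTwo, hR, hs1]
    simp only [LinearMap.comp_apply, this]
    rw [hA]
    simp [sOne]
  have c2 : sOne σ ∘ₗ sTwo σ ∘ₗ dOne (K := K) L = dTwo (K := K) L ∘ₗ σ := by
    apply TensorProduct.ext'
    intro x y
    have : sTwo σ (dOne (K := K) L (x ⊗ₜ[K] y)) = oneC ⊗ₜ[K] σ (x ⊗ₜ[K] y) := by
      simp [dOne, sTwo, hL, hs1, hD]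
    simp only [LinearMap.comp_apply, this, hB]
  have c3 : sTwo σ ∘ₗ sOne σ ∘ₗ dTwo (K := K) R = dOne (K := K) R ∘ₗ σ := by
    apply TensorProduct.ext'
    intro x y
    have : sOne σ (dTwo (K := K) R (x ⊗ₜ[K] y)) =
        (TensorProduct.assoc K C C C) (σ (x ⊗ₜ[K] y) ⊗ₜ[K] oneC) := by
      simp [dTwo, sOne, hR]
    simp only [LinearMap.comp_apply, this, hCc]
  have c4 : sTwo σ ∘ₗ sOne σ ∘ₗ dTwo (K := K) L = dOne (K := K) L ∘ₗ σ := by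
    apply TensorProduct.ext'
    intro x y
    have : sOne σ (dTwo (K := K) L (x ⊗ₜ[K] y)) = oneC ⊗ₜ[K] (x ⊗ₜ[K] y) := by
      simp [dTwo, sOne, hL, hs2]
    simp only [LinearMap.comp_apply, this, hD]
    simp [sTwo]
  -- decomposition of the reduced coproduct operators
  have hdTwo : dTwo (K := K) (redCop D oneC) = dTwo D - dTwo (K := K) R - dTwo (K := K) L := by
    simp [dTwo, redCop, LinearMap.lTensor_sub, hR, hL]
  have hdOne : dOne (K := K) (redCop D oneC) = dOne D - dOne (K := K) R - dOne (K := K) L := by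
    simp [dOne, redCop, LinearMap.rTensor_sub, LinearMap.comp_sub, hR, hL]
  constructor
  · rw [hdTwo, hdOne]
    simp only [LinearMap.sub_comp, LinearMap.comp_sub]
    rw [hy1, ← c1, ← c2]
  · rw [hdTwo, hdOne]
    simp only [LinearMap.sub_comp, LinearMap.comp_sub]
    rw [hy2, ← c3, ← c4]
end
end

section
/- Let (C,Δ,ε,σ) be a Yang–Baxter coalgebra. Then Δ_σ = (id_C ⊗ σ ⊗ id_C)∘(Δ⊗Δ) makes C⊗C a coassociative counital coalgebra with counit ε⊗ε (the twisted coalgebra structure on C⊗C). -/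
open TensorProduct
noncomputable section
variable {K : Type*} [Field K] [CharZero K] {C : Type*} [AddCommGroup C] [Module K C]

/-- `id_C ⊗ σ ⊗ id_C` on `(C⊗C)⊗(C⊗C)`. -/
def midTwist (σ : C ⊗[K] C →ₗ[K] C ⊗[K] C) :
    (C ⊗[K] C) ⊗[K] (C ⊗[K] C) →ₗ[K] (C ⊗[K] C) ⊗[K] (C ⊗[K] C) :=
  ((TensorProduct.assoc K C C (C ⊗[K] C)).symm.toLinearMap ∘ₗ
      LinearMap.lTensor C (TensorProduct.assoc K C C C).toLinearMap) ∘ₗ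
    LinearMap.lTensor C (LinearMap.rTensor C σ) ∘ₗ
    (LinearMap.lTensor C (TensorProduct.assoc K C C C).symm.toLinearMap ∘ₗ
      (TensorProduct.assoc K C C (C ⊗[K] C)).toLinearMap)

/-- the twisted coproduct `Δ_σ = (id ⊗ σ ⊗ id)(Δ ⊗ Δ)` on `C ⊗ C`. -/
def dSigma (σ : C ⊗[K] C →ₗ[K] C ⊗[K] C) (D : C →ₗ[K] C ⊗[K] C) :
    C ⊗[K] C →ₗ[K] (C ⊗[K] C) ⊗[K] (C ⊗[K] C) :=
  midTwist σ ∘ₗ TensorProduct.map D D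

/-- the counit `ε ⊗ ε` of `C ⊗ C`. -/
def epsSigma (ε : C →ₗ[K] K) : C ⊗[K] C →ₗ[K] K :=
  (TensorProduct.lid K K).toLinearMap ∘ₗ TensorProduct.map ε ε

open LinearMap (lTensor rTensor)

set_option linter.unusedSectionVars false
set_option maxHeartbeats 1000000

section Aux
variable (σ : C ⊗[K] C →ₗ[K] C ⊗[K] C) (D : C →ₗ[K] C ⊗[K] C) (ε : C →ₗ[K] K)
variable (X Y : Type*) [AddCommGroup X] [Module K X] [AddCommGroup Y] [Module K Y]

/-- σ on slots 1,2 with tail X -/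
def S1 : C ⊗[K] (C ⊗[K] X) →ₗ[K] C ⊗[K] (C ⊗[K] X) :=
  (TensorProduct.assoc K C C X).toLinearMap ∘ₗ rTensor X σ ∘ₗ
    (TensorProduct.assoc K C C X).symm.toLinearMap

/-- Δ on slot 1 with tail X -/
def D1 : C ⊗[K] X →ₗ[K] C ⊗[K] (C ⊗[K] X) :=
  (TensorProduct.assoc K C C X).toLinearMap ∘ₗ rTensor X D

/-- ε on slot 1 with tail X -/
def E1 : C ⊗[K] X →ₗ[K] X :=
  (TensorProduct.lid K X).toLinearMap ∘ₗ rTensor X ε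

/-- reassociator (C⊗(C⊗C))⊗X → C⊗(C⊗(C⊗X)) -/
def Psi : (C ⊗[K] (C ⊗[K] C)) ⊗[K] X →ₗ[K] C ⊗[K] (C ⊗[K] (C ⊗[K] X)) :=
  lTensor C (TensorProduct.assoc K C C X).toLinearMap ∘ₗ
    (TensorProduct.assoc K C (C ⊗[K] C) X).toLinearMap

lemma S1_C : S1 σ C = sOne σ := rfl
lemma D1_C : D1 D C = dOne D := rfl
lemma E1_C : E1 ε C = eOne ε := rfl

/-- coherence helper -/
lemma Hpsi (u : C ⊗[K] C) (c : C) (x : X) :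
    Psi X ((TensorProduct.assoc K C C C) (u ⊗ₜ[K] c) ⊗ₜ[K] x)
      = (TensorProduct.assoc K C C (C ⊗[K] X)) (u ⊗ₜ[K] (c ⊗ₜ[K] x)) := by
  induction u using TensorProduct.induction_on with
  | zero => simp [Psi]
  | tmul p q => simp [Psi]
  | add u v hu hv =>
      simp only [TensorProduct.add_tmul, map_add] at hu hv ⊢
      rw [hu, hv]

lemma br_a : S1 σ X ∘ₗ (TensorProduct.assoc K C C X).toLinearMap
    = (TensorProduct.assoc K C C X).toLinearMap ∘ₗ rTensor X σ := by
  ext a b x; simp [S1]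

lemma br_c : E1 ε (C ⊗[K] X) ∘ₗ (TensorProduct.assoc K C C X).toLinearMap
    = rTensor X (eOne ε) := by
  ext a b x; simp [E1, eOne, TensorProduct.smul_tmul']

lemma br_d : lTensor C (E1 ε X) ∘ₗ (TensorProduct.assoc K C C X).toLinearMap
    = rTensor X (eTwo ε) := by
  ext a b x; simp [E1, eTwo, TensorProduct.smul_tmul', TensorProduct.tmul_smul]

lemma br_e : lTensor C (D1 D X) ∘ₗ (TensorProduct.assoc K C C X).toLinearMap
    = Psi X ∘ₗ rTensor X (dTwo D) := by
  ext a b x; simp [D1, dTwo, Psi]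

lemma br_f : D1 D (C ⊗[K] X) ∘ₗ (TensorProduct.assoc K C C X).toLinearMap
    = Psi X ∘ₗ rTensor X (dOne D) := by
  ext a b x
  simp only [D1, dOne, LinearMap.coe_comp, LinearEquiv.coe_coe, Function.comp_apply,
    TensorProduct.assoc_tmul, LinearMap.rTensor_tmul]
  exact (Hpsi X (D a) b x).symm

lemma br_g : S1 σ (C ⊗[K] X) ∘ₗ Psi X = Psi X ∘ₗ rTensor X (sOne σ) := by
  ext a b c x
  simp only [S1, sOne, Psi, LinearMap.coe_comp, LinearEquiv.coe_coe, Function.comp_apply,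
    TensorProduct.assoc_tmul, LinearMap.rTensor_tmul, LinearMap.lTensor_tmul,
    TensorProduct.assoc_symm_tmul]
  exact (Hpsi X (σ (a ⊗ₜ[K] b)) c x).symm

lemma br_h : lTensor C (S1 σ X) ∘ₗ Psi X = Psi X ∘ₗ rTensor X (sTwo σ) := by
  ext a b c x
  simp [S1, sTwo, Psi]

end Aux
section Aux2
variable (σ : C ⊗[K] C →ₗ[K] C ⊗[K] C) (D : C →ₗ[K] C ⊗[K] C) (ε : C →ₗ[K] K)
variable (X Y : Type*) [AddCommGroup X] [Module K X] [AddCommGroup Y] [Module K Y]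

lemma Hnat (u : C ⊗[K] C) (g : X →ₗ[K] Y) (x : X) :
    lTensor C (lTensor C g) ((TensorProduct.assoc K C C X) (u ⊗ₜ[K] x))
      = (TensorProduct.assoc K C C Y) (u ⊗ₜ[K] g x) := by
  induction u using TensorProduct.induction_on with
  | zero => simp
  | tmul p q => simp
  | add u v hu hv =>
      simp only [TensorProduct.add_tmul, map_add] at hu hv ⊢
      rw [hu, hv]

lemma nat_D (g : X →ₗ[K] Y) :
    D1 D Y ∘ₗ lTensor C g = lTensor C (lTensor C g) ∘ₗ D1 D X := by
  ext a x
  simp only [D1, LinearMap.coe_comp, LinearEquiv.coe_coe, Function.comp_apply,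
    LinearMap.lTensor_tmul, LinearMap.rTensor_tmul]
  exact (Hnat _ _ (D a) g x).symm

lemma nat_S (g : X →ₗ[K] Y) :
    S1 σ Y ∘ₗ lTensor C (lTensor C g) = lTensor C (lTensor C g) ∘ₗ S1 σ X := by
  ext a b x
  simp only [S1, LinearMap.coe_comp, LinearEquiv.coe_coe, Function.comp_apply,
    LinearMap.lTensor_tmul, LinearMap.rTensor_tmul, TensorProduct.assoc_symm_tmul]
  exact (Hnat _ _ (σ (a ⊗ₜ[K] b)) g x).symm

lemma nat_E (g : X →ₗ[K] Y) :
    g ∘ₗ E1 ε X = E1 ε Y ∘ₗ lTensor C g := by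
  ext a x
  simp [E1, TensorProduct.smul_tmul', map_smul]

-- pointwise bridges
lemma br_a' (w : (C ⊗[K] C) ⊗[K] X) :
    S1 σ X ((TensorProduct.assoc K C C X) w)
      = (TensorProduct.assoc K C C X) (rTensor X σ w) := by
  simpa using LinearMap.congr_fun (br_a σ X) w

lemma br_e' (w : (C ⊗[K] C) ⊗[K] X) :
    lTensor C (D1 D X) ((TensorProduct.assoc K C C X) w)
      = Psi X (rTensor X (dTwo D) w) := by
  simpa using LinearMap.congr_fun (br_e D X) w

lemma br_f' (w : (C ⊗[K] C) ⊗[K] X) :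
    D1 D (C ⊗[K] X) ((TensorProduct.assoc K C C X) w)
      = Psi X (rTensor X (dOne D) w) := by
  simpa using LinearMap.congr_fun (br_f D X) w

lemma br_g' (v : (C ⊗[K] (C ⊗[K] C)) ⊗[K] X) :
    S1 σ (C ⊗[K] X) (Psi X v) = Psi X (rTensor X (sOne σ) v) := by
  simpa using LinearMap.congr_fun (br_g σ X) v

lemma br_h' (v : (C ⊗[K] (C ⊗[K] C)) ⊗[K] X) :
    lTensor C (S1 σ X) (Psi X v) = Psi X (rTensor X (sTwo σ) v) := by
  simpa using LinearMap.congr_fun (br_h σ X) v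

lemma L_cl (hcl : eOne ε ∘ₗ D = LinearMap.id) :
    E1 ε (C ⊗[K] X) ∘ₗ D1 D X = LinearMap.id := by
  rw [D1, ← LinearMap.comp_assoc, br_c, ← LinearMap.rTensor_comp, hcl, LinearMap.rTensor_id]

lemma L_cr (hcr : eTwo ε ∘ₗ D = LinearMap.id) :
    lTensor C (E1 ε X) ∘ₗ D1 D X = LinearMap.id := by
  rw [D1, ← LinearMap.comp_assoc, br_d, ← LinearMap.rTensor_comp, hcr, LinearMap.rTensor_id]

lemma L_e1 (he1 : eTwo ε ∘ₗ σ = eOne ε) :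
    lTensor C (E1 ε X) ∘ₗ S1 σ X = E1 ε (C ⊗[K] X) := by
  rw [← LinearMap.cancel_right (TensorProduct.assoc K C C X).surjective]
  rw [LinearMap.comp_assoc, br_a, ← LinearMap.comp_assoc, br_d, ← LinearMap.rTensor_comp,
    he1, br_c]

lemma L_e2 (he2 : eOne ε ∘ₗ σ = eTwo ε) :
    E1 ε (C ⊗[K] X) ∘ₗ S1 σ X = lTensor C (E1 ε X) := by
  rw [← LinearMap.cancel_right (TensorProduct.assoc K C C X).surjective]
  rw [LinearMap.comp_assoc, br_a, ← LinearMap.comp_assoc, br_c, ← LinearMap.rTensor_comp,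
    he2, br_d]

lemma L_co (hco : dOne D ∘ₗ D = dTwo D ∘ₗ D) :
    D1 D (C ⊗[K] X) ∘ₗ D1 D X = lTensor C (D1 D X) ∘ₗ D1 D X := by
  apply LinearMap.ext; intro z
  have h0 : D1 D X z = (TensorProduct.assoc K C C X) (rTensor X D z) := rfl
  simp only [LinearMap.comp_apply, h0, br_f', br_e']
  rw [← LinearMap.rTensor_comp_apply, hco, LinearMap.rTensor_comp_apply]

lemma L_y1 (hy1 : sOne σ ∘ₗ sTwo σ ∘ₗ dOne D = dTwo D ∘ₗ σ) :
    lTensor C (D1 D X) ∘ₗ S1 σ X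
      = S1 σ (C ⊗[K] X) ∘ₗ lTensor C (S1 σ X) ∘ₗ D1 D (C ⊗[K] X) := by
  apply LinearMap.ext; intro z
  obtain ⟨w, rfl⟩ := (TensorProduct.assoc K C C X).surjective z
  simp only [LinearMap.comp_apply, br_a', br_e', br_f', br_g', br_h']
  rw [← LinearMap.rTensor_comp_apply, ← hy1, LinearMap.rTensor_comp_apply,
    LinearMap.rTensor_comp_apply]

lemma L_y2 (hy2 : sTwo σ ∘ₗ sOne σ ∘ₗ dTwo D = dOne D ∘ₗ σ) :
    D1 D (C ⊗[K] X) ∘ₗ S1 σ X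
      = lTensor C (S1 σ X) ∘ₗ S1 σ (C ⊗[K] X) ∘ₗ lTensor C (D1 D X) := by
  apply LinearMap.ext; intro z
  obtain ⟨w, rfl⟩ := (TensorProduct.assoc K C C X).surjective z
  simp only [LinearMap.comp_apply, br_a', br_e', br_f', br_g', br_h']
  rw [← LinearMap.rTensor_comp_apply, ← hy2, LinearMap.rTensor_comp_apply,
    LinearMap.rTensor_comp_apply]

end Aux2
section Aux3
variable (σ : C ⊗[K] C →ₗ[K] C ⊗[K] C) (D : C →ₗ[K] C ⊗[K] C) (ε : C →ₗ[K] K)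

/-- `α4 ∘ dSigma` in right-associated form. -/
lemma Hm1 (u v : C ⊗[K] C) :
    (TensorProduct.assoc K C C (C ⊗[K] C)) (midTwist σ (u ⊗ₜ[K] v))
      = lTensor C (S1 σ C) ((TensorProduct.assoc K C C (C ⊗[K] C)) (u ⊗ₜ[K] v)) := by
  induction u using TensorProduct.induction_on with
  | zero => simp
  | tmul p q =>
      induction v using TensorProduct.induction_on with
      | zero => simp
      | tmul c d => simp [midTwist, S1]
      | add v w hv hw =>
          simp only [TensorProduct.tmul_add, map_add] at hv hw ⊢
          rw [hv, hw]
  | add u w hu hw =>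
      simp only [TensorProduct.add_tmul, map_add] at hu hw ⊢
      rw [hu, hw]

lemma M1 : (TensorProduct.assoc K C C (C ⊗[K] C)).toLinearMap ∘ₗ dSigma σ D
    = lTensor C (S1 σ C) ∘ₗ D1 D (C ⊗[K] C) ∘ₗ lTensor C D := by
  ext x y
  simp only [dSigma, D1, LinearMap.coe_comp, LinearEquiv.coe_coe, Function.comp_apply,
    TensorProduct.map_tmul, LinearMap.lTensor_tmul, LinearMap.rTensor_tmul]
  exact Hm1 σ (D x) (D y)

lemma Coh1 (g : C ⊗[K] C →ₗ[K] C ⊗[K] (C ⊗[K] (C ⊗[K] C))) :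
    (TensorProduct.assoc K C C (C ⊗[K] (C ⊗[K] (C ⊗[K] C)))).toLinearMap ∘ₗ
        lTensor (C ⊗[K] C) g
      = lTensor C (lTensor C g) ∘ₗ (TensorProduct.assoc K C C (C ⊗[K] C)).toLinearMap := by
  ext x y
  simp

end Aux3

section Beta
variable (σ : C ⊗[K] C →ₗ[K] C ⊗[K] C) (D : C →ₗ[K] C ⊗[K] C) (ε : C →ₗ[K] K)

def beta : (C ⊗[K] C) ⊗[K] ((C ⊗[K] C) ⊗[K] (C ⊗[K] C)) ≃ₗ[K]
    C ⊗[K] (C ⊗[K] (C ⊗[K] (C ⊗[K] (C ⊗[K] C)))) :=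
  (TensorProduct.congr (LinearEquiv.refl K (C ⊗[K] C)) (TensorProduct.assoc K C C (C ⊗[K] C))).trans
    (TensorProduct.assoc K C C (C ⊗[K] (C ⊗[K] (C ⊗[K] C))))

lemma beta_lin : (beta (K := K) (C := C)).toLinearMap
    = (TensorProduct.assoc K C C (C ⊗[K] (C ⊗[K] (C ⊗[K] C)))).toLinearMap ∘ₗ
        lTensor (C ⊗[K] C) (TensorProduct.assoc K C C (C ⊗[K] C)).toLinearMap := by
  ext x y
  simp [beta]

lemma HcohL2 (p d : C) (s η : C ⊗[K] C) :
    beta ((TensorProduct.assoc K (C ⊗[K] C) (C ⊗[K] C) (C ⊗[K] C))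
        (((TensorProduct.assoc K C C (C ⊗[K] C)).symm
            (p ⊗ₜ[K] ((TensorProduct.assoc K C C C) (s ⊗ₜ[K] d)))) ⊗ₜ[K] η))
      = p ⊗ₜ[K] ((TensorProduct.assoc K C C (C ⊗[K] (C ⊗[K] C))) (s ⊗ₜ[K] (d ⊗ₜ[K] η))) := by
  induction s using TensorProduct.induction_on with
  | zero => simp [beta]
  | tmul m n => simp [beta]
  | add s t hs ht =>
      simp only [TensorProduct.add_tmul, TensorProduct.tmul_add, map_add] at hs ht ⊢
      rw [hs, ht]

lemma HcohL (u v η : C ⊗[K] C) :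
    beta ((TensorProduct.assoc K (C ⊗[K] C) (C ⊗[K] C) (C ⊗[K] C))
        ((midTwist σ (u ⊗ₜ[K] v)) ⊗ₜ[K] η))
      = lTensor C (S1 σ (C ⊗[K] (C ⊗[K] C)))
          ((TensorProduct.assoc K C C (C ⊗[K] (C ⊗[K] (C ⊗[K] C))))
            (u ⊗ₜ[K] ((TensorProduct.assoc K C C (C ⊗[K] C)) (v ⊗ₜ[K] η)))) := by
  induction u using TensorProduct.induction_on with
  | zero => simp
  | tmul p q =>
      induction v using TensorProduct.induction_on with
      | zero => simp
      | tmul c d =>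
          have h2 := HcohL2 p d (σ (q ⊗ₜ[K] c)) η
          simp only [midTwist, S1, LinearMap.coe_comp, LinearEquiv.coe_coe, Function.comp_apply,
            TensorProduct.assoc_tmul, TensorProduct.assoc_symm_tmul, LinearMap.lTensor_tmul,
            LinearMap.rTensor_tmul] at h2 ⊢
          exact h2
      | add v w hv hw =>
          simp only [TensorProduct.tmul_add, TensorProduct.add_tmul, map_add] at hv hw ⊢
          rw [hv, hw]
  | add u w hu hw =>
      simp only [TensorProduct.tmul_add, TensorProduct.add_tmul, map_add] at hu hw ⊢
      rw [hu, hw]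

lemma CohL : (beta (K := K) (C := C)).toLinearMap ∘ₗ
      (TensorProduct.assoc K (C ⊗[K] C) (C ⊗[K] C) (C ⊗[K] C)).toLinearMap ∘ₗ
      rTensor (C ⊗[K] C) (dSigma σ D)
    = lTensor C (S1 σ (C ⊗[K] (C ⊗[K] C))) ∘ₗ
        D1 D (C ⊗[K] (C ⊗[K] (C ⊗[K] C))) ∘ₗ
        lTensor C (D1 D (C ⊗[K] C)) ∘ₗ
        (TensorProduct.assoc K C C (C ⊗[K] C)).toLinearMap := by
  ext x1 x2 y1 y2
  simp only [dSigma, D1, LinearMap.coe_comp, LinearEquiv.coe_coe, Function.comp_apply,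
    TensorProduct.map_tmul, LinearMap.lTensor_tmul, LinearMap.rTensor_tmul,
    TensorProduct.assoc_tmul]
  exact HcohL σ (D x1) (D x2) (y1 ⊗ₜ[K] y2)

lemma CohEL : (TensorProduct.lid K (C ⊗[K] C)).toLinearMap ∘ₗ rTensor (C ⊗[K] C) (epsSigma ε)
    = E1 ε (C ⊗[K] C) ∘ₗ E1 ε (C ⊗[K] (C ⊗[K] C)) ∘ₗ
        (TensorProduct.assoc K C C (C ⊗[K] C)).toLinearMap := by
  ext x1 x2 y
  simp [E1, epsSigma, TensorProduct.smul_tmul', mul_smul, mul_comm]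

lemma CohER : (TensorProduct.rid K (C ⊗[K] C)).toLinearMap ∘ₗ lTensor (C ⊗[K] C) (epsSigma ε)
    = lTensor C (eTwo ε) ∘ₗ lTensor C (lTensor C (E1 ε C)) ∘ₗ
        (TensorProduct.assoc K C C (C ⊗[K] C)).toLinearMap := by
  ext x1 x2 y
  simp [E1, eTwo, epsSigma, TensorProduct.smul_tmul', TensorProduct.tmul_smul, smul_smul, mul_comm]

end Beta
section Main
variable (σ : C ⊗[K] C →ₗ[K] C ⊗[K] C) (D : C →ₗ[K] C ⊗[K] C) (ε : C →ₗ[K] K)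

lemma main_word (hco : dOne D ∘ₗ D = dTwo D ∘ₗ D)
    (hy1 : sOne σ ∘ₗ sTwo σ ∘ₗ dOne D = dTwo D ∘ₗ σ)
    (hy2 : sTwo σ ∘ₗ sOne σ ∘ₗ dTwo D = dOne D ∘ₗ σ) :
    ∀ z : C ⊗[K] C,
      lTensor C (S1 σ (C ⊗[K] (C ⊗[K] C)))
        (D1 D (C ⊗[K] (C ⊗[K] (C ⊗[K] C)))
          (lTensor C (D1 D (C ⊗[K] C))
            (lTensor C (S1 σ C) (D1 D (C ⊗[K] C) (lTensor C D z)))))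
      = lTensor C (lTensor C (lTensor C (S1 σ C)))
          (lTensor C (lTensor C (D1 D (C ⊗[K] C)))
            (lTensor C (lTensor C (lTensor C D))
              (lTensor C (S1 σ C) (D1 D (C ⊗[K] C) (lTensor C D z))))) := by
  intro z
  -- LHS steps
  have h1 : ∀ w : C ⊗[K] (C ⊗[K] (C ⊗[K] C)),
      lTensor C (D1 D (C ⊗[K] C)) (lTensor C (S1 σ C) w)
        = lTensor C (lTensor C (S1 σ C))
            (lTensor C (S1 σ (C ⊗[K] C)) (lTensor C (lTensor C (D1 D C)) w)) := by
    intro w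
    rw [← LinearMap.lTensor_comp_apply, L_y2 σ D C hy2]
    simp only [LinearMap.lTensor_comp, LinearMap.comp_apply]
  have h2 : ∀ v : C ⊗[K] (C ⊗[K] (C ⊗[K] (C ⊗[K] C))),
      D1 D (C ⊗[K] (C ⊗[K] (C ⊗[K] C))) (lTensor C (lTensor C (S1 σ C)) v)
        = lTensor C (lTensor C (lTensor C (S1 σ C)))
            (D1 D (C ⊗[K] (C ⊗[K] (C ⊗[K] C))) v) := by
    intro v
    simpa using LinearMap.congr_fun
      (nat_D D (C ⊗[K] (C ⊗[K] (C ⊗[K] C))) (C ⊗[K] (C ⊗[K] (C ⊗[K] C))) (lTensor C (S1 σ C))) v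
  have h3 : ∀ v : C ⊗[K] (C ⊗[K] (C ⊗[K] (C ⊗[K] C))),
      D1 D (C ⊗[K] (C ⊗[K] (C ⊗[K] C))) (lTensor C (S1 σ (C ⊗[K] C)) v)
        = lTensor C (lTensor C (S1 σ (C ⊗[K] C)))
            (D1 D (C ⊗[K] (C ⊗[K] (C ⊗[K] C))) v) := by
    intro v
    simpa using LinearMap.congr_fun
      (nat_D D (C ⊗[K] (C ⊗[K] (C ⊗[K] C))) (C ⊗[K] (C ⊗[K] (C ⊗[K] C))) (S1 σ (C ⊗[K] C))) v
  have h4 : ∀ v : C ⊗[K] (C ⊗[K] C),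
      lTensor C (lTensor C (D1 D C)) (D1 D (C ⊗[K] C) v)
        = D1 D (C ⊗[K] (C ⊗[K] C)) (lTensor C (D1 D C) v) := by
    intro v
    simpa using (LinearMap.congr_fun (nat_D D (C ⊗[K] C) (C ⊗[K] (C ⊗[K] C)) (D1 D C)) v).symm
  have h5 : ∀ v : C ⊗[K] (C ⊗[K] (C ⊗[K] C)),
      D1 D (C ⊗[K] (C ⊗[K] (C ⊗[K] C))) (D1 D (C ⊗[K] (C ⊗[K] C)) v)
        = lTensor C (D1 D (C ⊗[K] (C ⊗[K] C))) (D1 D (C ⊗[K] (C ⊗[K] C)) v) := by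
    intro v
    simpa using LinearMap.congr_fun (L_co D (C ⊗[K] (C ⊗[K] C)) hco) v
  have hL6 : ∀ z : C ⊗[K] C,
      lTensor C (D1 D C) (lTensor C D z) = lTensor C (dTwo D ∘ₗ D) z := by
    intro z
    rw [← LinearMap.lTensor_comp_apply, D1_C, hco]
  have hF : ∀ v : C ⊗[K] (C ⊗[K] (C ⊗[K] (C ⊗[K] (C ⊗[K] C)))),
      lTensor C (S1 σ (C ⊗[K] (C ⊗[K] C)))
          (lTensor C (lTensor C (lTensor C (S1 σ C))) v)
        = lTensor C (lTensor C (lTensor C (S1 σ C)))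
            (lTensor C (S1 σ (C ⊗[K] (C ⊗[K] C))) v) := by
    intro v
    rw [← LinearMap.lTensor_comp_apply,
      nat_S σ (C ⊗[K] (C ⊗[K] C)) (C ⊗[K] (C ⊗[K] C)) (S1 σ C)]
    simp only [LinearMap.lTensor_comp, LinearMap.comp_apply]
  -- RHS steps
  have hr1 : ∀ w : C ⊗[K] (C ⊗[K] (C ⊗[K] C)),
      lTensor C (lTensor C (lTensor C D)) (lTensor C (S1 σ C) w)
        = lTensor C (S1 σ (C ⊗[K] C)) (lTensor C (lTensor C (lTensor C D)) w) := by
    intro w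
    rw [← LinearMap.lTensor_comp_apply, ← nat_S σ C (C ⊗[K] C) D]
    simp only [LinearMap.lTensor_comp, LinearMap.comp_apply]
  have hr2 : ∀ v : C ⊗[K] (C ⊗[K] (C ⊗[K] (C ⊗[K] C))),
      lTensor C (lTensor C (D1 D (C ⊗[K] C))) (lTensor C (S1 σ (C ⊗[K] C)) v)
        = lTensor C (S1 σ (C ⊗[K] (C ⊗[K] C)))
            (lTensor C (lTensor C (S1 σ (C ⊗[K] C)))
              (lTensor C (D1 D (C ⊗[K] (C ⊗[K] C))) v)) := by
    intro v
    rw [← LinearMap.lTensor_comp_apply, L_y1 σ D (C ⊗[K] C) hy1]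
    simp only [LinearMap.lTensor_comp, LinearMap.comp_apply]
  have hr3 : ∀ v : C ⊗[K] (C ⊗[K] C),
      lTensor C (lTensor C (lTensor C D)) (D1 D (C ⊗[K] C) v)
        = D1 D (C ⊗[K] (C ⊗[K] C)) (lTensor C (lTensor C D) v) := by
    intro v
    simpa using (LinearMap.congr_fun (nat_D D (C ⊗[K] C) (C ⊗[K] (C ⊗[K] C)) (lTensor C D)) v).symm
  have hR6 : ∀ z : C ⊗[K] C,
      lTensor C (lTensor C D) (lTensor C D z) = lTensor C (dTwo D ∘ₗ D) z := by
    intro z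
    rw [← LinearMap.lTensor_comp_apply]
    rfl
  rw [h1, h2, h3, h4, h5, hL6, hF, hr1, hr2, hr3, hR6]
end Main

theorem stmt4 (D : C →ₗ[K] C ⊗[K] C) (ε : C →ₗ[K] K) (σ : C ⊗[K] C →ₗ[K] C ⊗[K] C)
    -- coalgebra axioms
    (hco : dOne D ∘ₗ D = dTwo D ∘ₗ D)
    (hcl : eOne ε ∘ₗ D = LinearMap.id) (hcr : eTwo ε ∘ₗ D = LinearMap.id)
    -- Yang–Baxter coalgebra axioms
    (hbij : Function.Bijective σ)
    (hYB : sOne σ ∘ₗ sTwo σ ∘ₗ sOne σ = sTwo σ ∘ₗ sOne σ ∘ₗ sTwo σ)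
    (hy1 : sOne σ ∘ₗ sTwo σ ∘ₗ dOne D = dTwo D ∘ₗ σ)
    (hy2 : sTwo σ ∘ₗ sOne σ ∘ₗ dTwo D = dOne D ∘ₗ σ)
    (he1 : eTwo ε ∘ₗ σ = eOne ε) (he2 : eOne ε ∘ₗ σ = eTwo ε) :
    -- `Δ_σ` is coassociative on `C ⊗ C` with counit `ε ⊗ ε`
    ((TensorProduct.assoc K (C ⊗[K] C) (C ⊗[K] C) (C ⊗[K] C)).toLinearMap ∘ₗ
        LinearMap.rTensor (C ⊗[K] C) (dSigma σ D) ∘ₗ dSigma σ D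
      = LinearMap.lTensor (C ⊗[K] C) (dSigma σ D) ∘ₗ dSigma σ D) ∧
    ((TensorProduct.lid K (C ⊗[K] C)).toLinearMap ∘ₗ
        LinearMap.rTensor (C ⊗[K] C) (epsSigma ε) ∘ₗ dSigma σ D = LinearMap.id) ∧
    ((TensorProduct.rid K (C ⊗[K] C)).toLinearMap ∘ₗ
        LinearMap.lTensor (C ⊗[K] C) (epsSigma ε) ∘ₗ dSigma σ D = LinearMap.id) := by
  have hM : ∀ z : C ⊗[K] C,
      (TensorProduct.assoc K C C (C ⊗[K] C)) (dSigma σ D z)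
        = lTensor C (S1 σ C) (D1 D (C ⊗[K] C) (lTensor C D z)) := by
    intro z
    have := LinearMap.congr_fun (M1 σ D) z
    simpa only [LinearMap.comp_apply, LinearEquiv.coe_coe] using this
  refine ⟨?_, ?_, ?_⟩
  · -- coassociativity
    apply LinearMap.ext; intro z
    apply (beta (K := K) (C := C)).injective
    simp only [LinearMap.comp_apply, LinearEquiv.coe_coe]
    have hL := LinearMap.congr_fun (CohL σ D) (dSigma σ D z)
    simp only [LinearMap.comp_apply, LinearEquiv.coe_coe] at hL
    rw [hL]
    have hB := LinearMap.congr_fun (beta_lin (K := K) (C := C))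
      (LinearMap.lTensor (C ⊗[K] C) (dSigma σ D) (dSigma σ D z))
    simp only [LinearMap.comp_apply, LinearEquiv.coe_coe] at hB
    rw [hB, ← LinearMap.lTensor_comp_apply, M1 σ D]
    have hC := LinearMap.congr_fun
      (Coh1 (lTensor C (S1 σ C) ∘ₗ D1 D (C ⊗[K] C) ∘ₗ lTensor C D)) (dSigma σ D z)
    simp only [LinearMap.comp_apply, LinearEquiv.coe_coe] at hC
    rw [hC, hM]
    simp only [LinearMap.lTensor_comp, LinearMap.comp_apply]
    exact main_word σ D hco hy1 hy2 z
  · -- left counit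
    apply LinearMap.ext; intro z
    simp only [LinearMap.comp_apply, LinearEquiv.coe_coe, LinearMap.id_apply]
    have h1 := LinearMap.congr_fun (CohEL ε) (dSigma σ D z)
    simp only [LinearMap.comp_apply, LinearEquiv.coe_coe] at h1
    rw [h1, hM]
    have h2 : ∀ v : C ⊗[K] (C ⊗[K] (C ⊗[K] C)),
        E1 ε (C ⊗[K] (C ⊗[K] C)) (lTensor C (S1 σ C) v)
          = S1 σ C (E1 ε (C ⊗[K] (C ⊗[K] C)) v) := by
      intro v
      have := LinearMap.congr_fun (nat_E ε (C ⊗[K] (C ⊗[K] C)) (C ⊗[K] (C ⊗[K] C)) (S1 σ C)) v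
      simpa only [LinearMap.comp_apply] using this.symm
    rw [h2]
    have h3 : ∀ v : C ⊗[K] (C ⊗[K] C),
        E1 ε (C ⊗[K] (C ⊗[K] C)) (D1 D (C ⊗[K] C) v) = v := by
      intro v
      have := LinearMap.congr_fun (L_cl D ε (C ⊗[K] C) hcl) v
      simpa only [LinearMap.comp_apply, LinearMap.id_apply] using this
    rw [h3]
    have h4 : ∀ v : C ⊗[K] (C ⊗[K] C),
        E1 ε (C ⊗[K] C) (S1 σ C v) = lTensor C (E1 ε C) v := by
      intro v
      have := LinearMap.congr_fun (L_e2 σ ε C he2) v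
      simpa only [LinearMap.comp_apply] using this
    rw [h4, ← LinearMap.lTensor_comp_apply, E1_C, hcl, LinearMap.lTensor_id,
      LinearMap.id_apply]
  · -- right counit
    apply LinearMap.ext; intro z
    simp only [LinearMap.comp_apply, LinearEquiv.coe_coe, LinearMap.id_apply]
    have h1 := LinearMap.congr_fun (CohER ε) (dSigma σ D z)
    simp only [LinearMap.comp_apply, LinearEquiv.coe_coe] at h1
    rw [h1, hM]
    have h2 : ∀ v : C ⊗[K] (C ⊗[K] (C ⊗[K] C)),
        lTensor C (lTensor C (E1 ε C)) (lTensor C (S1 σ C) v)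
          = lTensor C (E1 ε (C ⊗[K] C)) v := by
      intro v
      rw [← LinearMap.lTensor_comp_apply, L_e1 σ ε C he1]
    rw [h2]
    have h3 : ∀ v : C ⊗[K] (C ⊗[K] C),
        lTensor C (E1 ε (C ⊗[K] C)) (D1 D (C ⊗[K] C) v) = v := by
      intro v
      have := LinearMap.congr_fun (L_cr D ε (C ⊗[K] C) hcr) v
      simpa only [LinearMap.comp_apply, LinearMap.id_apply] using this
    rw [h3, ← LinearMap.lTensor_comp_apply, hcr, LinearMap.lTensor_id, LinearMap.id_apply]
end
end

section
/- Let V = ℂ^N and let ⋀_σ(V) = T(V)/I where I is the two-sided ideal of the tensor algebra T(V) generated by Ker(id_{V⊗V} − σ), with σ the q-braiding above (q not a root of unity). Then ⋀_σ(V) is generated by the images of e₁,…,e_N subject to the relations e_i² = 0 and e_j∧e_i = −q⁻¹ e_i∧e_j for i < j, and the set {e_{i₁}∧⋯∧e_{i_p} : 1 ≤ i₁ < ⋯ < i_p ≤ N, 0 ≤ p ≤ N} is a ℂ-linear basis of ⋀_σ(V). -/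
open TensorProduct
noncomputable section

/-- `V = ℂ^N`. -/
abbrev Vc (N : ℕ) := Fin N → ℂ

/-- the standard basis vector `e_i`. -/
def ec (N : ℕ) (i : Fin N) : Vc N := Pi.single i 1

/-- the braiding `σ` coming from the `R`-matrix of `U_q(sl_N)`. -/
def qsigma (N : ℕ) (q : ℂ) : Vc N ⊗[ℂ] Vc N →ₗ[ℂ] Vc N ⊗[ℂ] Vc N :=
  ((Pi.basisFun ℂ (Fin N)).tensorProduct (Pi.basisFun ℂ (Fin N))).constr ℂ
    (fun p : Fin N × Fin N =>
      if p.1 = p.2 then ec N p.1 ⊗ₜ[ℂ] ec N p.1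
      else if p.1 < p.2 then q⁻¹ • (ec N p.2 ⊗ₜ[ℂ] ec N p.1)
      else q⁻¹ • (ec N p.2 ⊗ₜ[ℂ] ec N p.1) + (1 - (q⁻¹) ^ 2) • (ec N p.1 ⊗ₜ[ℂ] ec N p.2))

/-- the degree-two inclusion `V ⊗ V → T(V)`, `u ⊗ v ↦ ι(u)·ι(v)`. -/
def degTwo (N : ℕ) : Vc N ⊗[ℂ] Vc N →ₗ[ℂ] TensorAlgebra ℂ (Vc N) :=
  TensorProduct.lift
    ((LinearMap.mul ℂ (TensorAlgebra ℂ (Vc N))).compl₁₂ (TensorAlgebra.ι ℂ) (TensorAlgebra.ι ℂ))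

/-- the relation generating the two-sided ideal `I = (Ker (id - σ))`. -/
def relQ (N : ℕ) (q : ℂ) : TensorAlgebra ℂ (Vc N) → TensorAlgebra ℂ (Vc N) → Prop :=
  fun a b => b = 0 ∧ a ∈ degTwo N '' (LinearMap.ker (LinearMap.id - qsigma N q) : Set (Vc N ⊗[ℂ] Vc N))

/-- the quantum exterior algebra `⋀_σ(V) = T(V)/I`. -/
abbrev QExt (N : ℕ) (q : ℂ) := RingQuot (relQ N q)

/-- the image of `e_i` in `⋀_σ(V)`. -/
def gen (N : ℕ) (q : ℂ) (i : Fin N) : QExt N q :=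
  RingQuot.mkAlgHom ℂ (relQ N q) (TensorAlgebra.ι ℂ (ec N i))

/-- the increasing product `e_{i₁} ∧ ⋯ ∧ e_{i_p}` for `S = {i₁ < ⋯ < i_p}`. -/
def basProd (N : ℕ) (q : ℂ) (S : Finset (Fin N)) : QExt N q :=
  ((S.sort (· ≤ ·)).map (gen N q)).prod

/-!
The relations `e_i² = 0` and `e_j e_i = -q⁻¹ e_i e_j` (`i < j`) lie in `Ker (id - σ)`; conversely,
for any `f : Fin N → A` satisfying them, `u ⊗ v ↦ f u * f v` factors through `id - σ`, so `f`
extends to `⋀_σ(V)`. By the relations, `e_i e_S` is `0`, `e_{S ∪ {i}}` or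
`-q⁻¹ e_m (e_i e_{S \ m})` with `m = min S`, so the increasing monomials `e_S` span. For
independence, let `e_i` act on the free module on `Finset (Fin N)` by
`δ_S ↦ (-q⁻¹)^#{j ∈ S | j < i} δ_{S ∪ {i}}` (and `0` if `i ∈ S`): then `e_S` sends `δ_∅` to `δ_S`.
-/

open Finset

namespace QWedge

variable {ι R : Type*} [LinearOrder ι] [CommRing R] (c : R)

def coeff (i : ι) (S : Finset ι) : R := c ^ #(S.filter (· < i))

/-- Models `e_i ∧ -` on `δ_S ↔ e_S`: `e_i` moves past the factors of `S` below `i`, each costing `c`. -/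
def lmul (i : ι) : Module.End R (Finset ι →₀ R) :=
  Finsupp.linearCombination R fun S =>
    if i ∈ S then 0 else Finsupp.single (insert i S) (coeff c i S)

variable {c}

lemma lmul_single (i : ι) (S : Finset ι) (r : R) :
    lmul c i (Finsupp.single S r) =
      if i ∈ S then 0 else Finsupp.single (insert i S) (r * coeff c i S) := by
  split_ifs with h <;> simp [lmul, h, Finsupp.smul_single]

lemma coeff_insert_of_lt {i j : ι} (h : j < i) {S : Finset ι} (hj : j ∉ S) :
    coeff c i (insert j S) = c * coeff c i S := by
  rw [coeff, coeff, filter_insert, if_pos h, card_insert_of_notMem (by simp [hj]), pow_succ']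

lemma coeff_insert_of_not_lt {i j : ι} (h : ¬ j < i) (S : Finset ι) :
    coeff c i (insert j S) = coeff c i S := by
  rw [coeff, coeff, filter_insert, if_neg h]

lemma coeff_eq_one {i : ι} {S : Finset ι} (h : ∀ j ∈ S, i < j) : coeff c i S = 1 := by
  rw [coeff, filter_false_of_mem fun j hj => not_lt_of_gt (h j hj), card_empty, pow_zero]

lemma lmul_single_one_of_forall_lt {i : ι} {S : Finset ι} (h : ∀ j ∈ S, i < j) :
    lmul c i (Finsupp.single S 1) = Finsupp.single (insert i S) 1 := by
  rw [lmul_single, if_neg fun hi => lt_irrefl i (h i hi), coeff_eq_one h, one_mul]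

lemma lmul_mul_self (i : ι) : lmul c i * lmul c i = 0 := by
  refine Finsupp.basisSingleOne.ext fun S => ?_
  by_cases hi : i ∈ S <;> simp [lmul_single, hi]

lemma lmul_mul_lmul_of_lt {i j : ι} (h : i < j) :
    lmul c j * lmul c i = c • (lmul c i * lmul c j) := by
  refine Finsupp.basisSingleOne.ext fun S => ?_
  by_cases hi : i ∈ S
  · by_cases hj : j ∈ S <;> simp [lmul_single, hi, hj]
  by_cases hj : j ∈ S
  · simp [lmul_single, hi, hj]
  simp only [Finsupp.coe_basisSingleOne, LinearMap.smul_apply, Module.End.mul_apply, lmul_single,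
    hi, hj, if_false, mem_insert, h.ne, h.ne', or_self, Finsupp.smul_single]
  rw [coeff_insert_of_lt h hi, coeff_insert_of_not_lt (not_lt_of_gt h), insert_comm]
  ring_nf

end QWedge

section QExt

variable (N : ℕ) (q : ℂ)

lemma basisFun_tensorProduct_apply (i j : Fin N) :
    (Pi.basisFun ℂ (Fin N)).tensorProduct (Pi.basisFun ℂ (Fin N)) (i, j) = ec N i ⊗ₜ ec N j := by
  simp [ec]

lemma qsigma_ec_tmul_ec (i j : Fin N) :
    qsigma N q (ec N i ⊗ₜ ec N j) =
      if i = j then ec N i ⊗ₜ ec N i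
      else if i < j then q⁻¹ • (ec N j ⊗ₜ ec N i)
      else q⁻¹ • (ec N j ⊗ₜ ec N i) + (1 - q⁻¹ ^ 2) • (ec N i ⊗ₜ ec N j) := by
  rw [qsigma, ← basisFun_tensorProduct_apply, Module.Basis.constr_basis,
    basisFun_tensorProduct_apply]

variable {N} in
lemma degTwo_tmul (u v : Vc N) :
    degTwo N (u ⊗ₜ v) = TensorAlgebra.ι ℂ u * TensorAlgebra.ι ℂ v := by
  simp [degTwo]

lemma ec_tmul_self_mem_ker (i : Fin N) :
    ec N i ⊗ₜ ec N i ∈ LinearMap.ker (LinearMap.id - qsigma N q) := by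
  simp [qsigma_ec_tmul_ec]

variable {N} in
lemma ec_tmul_add_ec_tmul_mem_ker {i j : Fin N} (h : i < j) :
    q⁻¹ • (ec N i ⊗ₜ ec N j) + ec N j ⊗ₜ ec N i ∈ LinearMap.ker (LinearMap.id - qsigma N q) := by
  simp only [LinearMap.mem_ker, LinearMap.sub_apply, LinearMap.id_apply, map_add, map_smul,
    qsigma_ec_tmul_ec, h.ne, h.ne', h, not_lt_of_gt h, if_false, if_true]
  module

variable {N q} in
lemma mkAlgHom_degTwo_eq_zero {x : Vc N ⊗[ℂ] Vc N}
    (hx : x ∈ LinearMap.ker (LinearMap.id - qsigma N q)) :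
    RingQuot.mkAlgHom ℂ (relQ N q) (degTwo N x) = 0 :=
  (RingQuot.mkAlgHom_rel ℂ ⟨rfl, x, hx, rfl⟩).trans (map_zero _)

theorem gen_mul_self (i : Fin N) : gen N q i * gen N q i = 0 := by
  have h := mkAlgHom_degTwo_eq_zero (ec_tmul_self_mem_ker N q i)
  rwa [degTwo_tmul, map_mul] at h

variable {N} in
theorem gen_mul_gen_of_lt {i j : Fin N} (h : i < j) :
    gen N q j * gen N q i = (-q⁻¹) • (gen N q i * gen N q j) := by
  have hrel : q⁻¹ • (gen N q i * gen N q j) + gen N q j * gen N q i = 0 := by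
    have h := mkAlgHom_degTwo_eq_zero (ec_tmul_add_ec_tmul_mem_ker q h)
    rwa [map_add, map_smul, map_add, map_smul, degTwo_tmul, degTwo_tmul, map_mul, map_mul] at h
  rw [eq_neg_of_add_eq_zero_right hrel]
  module

end QExt

section Lift

variable {N : ℕ} {q : ℂ} {A : Type*} [Ring A] [Algebra ℂ A] (f : Fin N → A)

def orderedMul : Vc N ⊗[ℂ] Vc N →ₗ[ℂ] A :=
  ((Pi.basisFun ℂ (Fin N)).tensorProduct (Pi.basisFun ℂ (Fin N))).constr ℂ
    fun p => if p.1 < p.2 then f p.1 * f p.2 else 0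

lemma orderedMul_ec_tmul_ec (i j : Fin N) :
    orderedMul f (ec N i ⊗ₜ ec N j) = if i < j then f i * f j else 0 := by
  rw [orderedMul, ← basisFun_tensorProduct_apply, Module.Basis.constr_basis]

def liftTensor : TensorAlgebra ℂ (Vc N) →ₐ[ℂ] A :=
  TensorAlgebra.lift ℂ ((Pi.basisFun ℂ (Fin N)).constr ℂ f)

lemma liftTensor_ι_ec (i : Fin N) : liftTensor f (TensorAlgebra.ι ℂ (ec N i)) = f i := by
  rw [liftTensor, TensorAlgebra.lift_ι_apply, ec, ← Pi.basisFun_apply, Module.Basis.constr_basis]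

variable {f}

lemma liftTensor_comp_degTwo (hsq : ∀ i, f i * f i = 0)
    (hswap : ∀ i j, i < j → f j * f i = (-q⁻¹) • (f i * f j)) :
    (liftTensor f).toLinearMap ∘ₗ degTwo N = orderedMul f ∘ₗ (LinearMap.id - qsigma N q) := by
  refine ((Pi.basisFun ℂ (Fin N)).tensorProduct (Pi.basisFun ℂ (Fin N))).ext fun ⟨i, j⟩ => ?_
  simp only [basisFun_tensorProduct_apply, LinearMap.comp_apply, AlgHom.toLinearMap_apply,
    degTwo_tmul, map_mul, liftTensor_ι_ec, LinearMap.sub_apply, LinearMap.id_apply,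
    qsigma_ec_tmul_ec]
  rcases lt_trichotomy i j with h | rfl | h
  · simp [orderedMul_ec_tmul_ec, h, h.ne, not_lt_of_gt h]
  · simp [hsq]
  · simp [orderedMul_ec_tmul_ec, h, h.ne', not_lt_of_gt h, hswap j i h]

def liftQExt (hsq : ∀ i, f i * f i = 0)
    (hswap : ∀ i j, i < j → f j * f i = (-q⁻¹) • (f i * f j)) : QExt N q →ₐ[ℂ] A :=
  RingQuot.liftAlgHom ℂ ⟨liftTensor f, by
    rintro _ _ ⟨rfl, x, hx, rfl⟩
    simpa [LinearMap.mem_ker.mp hx] using LinearMap.congr_fun (liftTensor_comp_degTwo hsq hswap) x⟩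

lemma liftQExt_gen (hsq : ∀ i, f i * f i = 0)
    (hswap : ∀ i j, i < j → f j * f i = (-q⁻¹) • (f i * f j)) (i : Fin N) :
    liftQExt hsq hswap (gen N q i) = f i := by
  rw [liftQExt, gen, RingQuot.liftAlgHom_mkAlgHom_apply, liftTensor_ι_ec]

end Lift

section Basis

variable (N : ℕ) (q : ℂ)

lemma basProd_empty : basProd N q ∅ = 1 := by simp [basProd]

variable {N q} in
lemma basProd_insert {i : Fin N} {S : Finset (Fin N)} (h : ∀ j ∈ S, i < j) :
    basProd N q (insert i S) = gen N q i * basProd N q S := by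
  rw [basProd, sort_insert _ (fun j hj => (h j hj).le) fun hi => lt_irrefl i (h i hi),
    List.map_cons, List.prod_cons, basProd]

lemma basProd_singleton (i : Fin N) : basProd N q {i} = gen N q i := by
  rw [← insert_empty, basProd_insert (by simp), basProd_empty, mul_one]

def wedgeRep : QExt N q →ₐ[ℂ] Module.End ℂ (Finset (Fin N) →₀ ℂ) :=
  liftQExt (QWedge.lmul_mul_self (c := -q⁻¹)) fun _ _ => QWedge.lmul_mul_lmul_of_lt

lemma wedgeRep_basProd_single_empty (S : Finset (Fin N)) :
    wedgeRep N q (basProd N q S) (Finsupp.single ∅ 1) = Finsupp.single S 1 := by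
  induction S using Finset.induction_on_min with
  | empty => simp [basProd_empty]
  | insert a S h ih =>
    rw [basProd_insert h, map_mul, Module.End.mul_apply, ih, wedgeRep, liftQExt_gen,
      QWedge.lmul_single_one_of_forall_lt h]

theorem linearIndependent_basProd : LinearIndependent ℂ (basProd N q) := by
  refine .of_comp (LinearMap.applyₗ (Finsupp.single ∅ 1) ∘ₗ (wedgeRep N q).toLinearMap) ?_
  convert Finsupp.linearIndependent_single_one ℂ (Finset (Fin N)) with S
  exact wedgeRep_basProd_single_empty N q S

theorem adjoin_range_gen : Algebra.adjoin ℂ (Set.range (gen N q)) = ⊤ := by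
  have hι : Algebra.adjoin ℂ (Set.range (TensorAlgebra.ι ℂ ∘ ec N)) = ⊤ := by
    rw [← Algebra.adjoin_span, eq_top_iff, ← TensorAlgebra.adjoin_range_ι]
    refine Algebra.adjoin_mono ?_
    rintro _ ⟨v, rfl⟩
    have hv : v ∈ Submodule.span ℂ (Set.range (ec N)) := by
      rw [show ec N = Pi.basisFun ℂ (Fin N) by ext; simp [ec], Module.Basis.span_eq]
      trivial
    rw [Set.range_comp]
    exact Submodule.image_span_subset_span _ _ ⟨v, hv, rfl⟩
  have hgen : Set.range (gen N q) =
      RingQuot.mkAlgHom ℂ (relQ N q) '' Set.range (TensorAlgebra.ι ℂ ∘ ec N) :=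
    Set.range_comp _ _
  rw [hgen, ← AlgHom.map_adjoin, hι, Algebra.map_top, AlgHom.range_eq_top]
  exact RingQuot.mkAlgHom_surjective ℂ _

lemma gen_mul_basProd_mem_span (S : Finset (Fin N)) (i : Fin N) :
    gen N q i * basProd N q S ∈ Submodule.span ℂ (basProd N q '' {T | T ⊆ insert i S}) := by
  induction S using Finset.induction_on_min generalizing i with
  | empty =>
    exact Submodule.subset_span ⟨{i}, by simp, by rw [basProd_singleton, basProd_empty, mul_one]⟩
  | insert a S ha ih =>
    rcases lt_trichotomy i a with h | rfl | h
    · have hi : ∀ j ∈ insert a S, i < j := by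
        simpa [h] using fun j hj => h.trans (ha j hj)
      rw [← basProd_insert hi]
      exact Submodule.subset_span ⟨_, Set.mem_ofPred.2 subset_rfl, rfl⟩
    · rw [basProd_insert ha, ← mul_assoc, gen_mul_self, zero_mul]
      exact zero_mem _
    · rw [basProd_insert ha, ← mul_assoc, gen_mul_gen_of_lt q h, smul_mul_assoc, mul_assoc]
      refine Submodule.smul_mem _ _ ?_
      have hmap : (Submodule.span ℂ (basProd N q '' {T | T ⊆ insert i S})).map
          (LinearMap.mulLeft ℂ (gen N q a)) ≤
            Submodule.span ℂ (basProd N q '' {T | T ⊆ insert i (insert a S)}) := by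
        rw [Submodule.map_span, Submodule.span_le]
        rintro _ ⟨_, ⟨T, hT, rfl⟩, rfl⟩
        have hlt : ∀ j ∈ T, a < j := fun j hj =>
          (mem_insert.1 (hT hj)).elim (fun hji => hji ▸ h) (ha j)
        refine Submodule.subset_span ⟨insert a T, ?_, basProd_insert hlt⟩
        exact insert_subset (by simp) (hT.trans (insert_subset_insert i (subset_insert a S)))
      exact hmap (Submodule.mem_map_of_mem (ih i))

lemma span_basProd_le_comap_mulLeft_gen (i : Fin N) :
    Submodule.span ℂ (Set.range (basProd N q)) ≤
      (Submodule.span ℂ (Set.range (basProd N q))).comap (LinearMap.mulLeft ℂ (gen N q i)) :=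
  Submodule.span_le.2 <| Set.range_subset_iff.2 fun S =>
    Submodule.span_mono (Set.image_subset_range _ _) (gen_mul_basProd_mem_span N q S i)

theorem span_basProd_eq_top : Submodule.span ℂ (Set.range (basProd N q)) = ⊤ := by
  set M := Submodule.span ℂ (Set.range (basProd N q))
  rw [eq_top_iff]
  rintro x -
  have hx : x ∈ Algebra.adjoin ℂ (Set.range (gen N q)) := by
    rw [adjoin_range_gen]
    trivial
  suffices h : ∀ m ∈ M, x * m ∈ M by
    simpa using h 1 (Submodule.subset_span ⟨∅, basProd_empty N q⟩)
  induction hx using Algebra.adjoin_induction with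
  | mem _ hx =>
    obtain ⟨i, rfl⟩ := hx
    exact fun m hm => span_basProd_le_comap_mulLeft_gen N q i hm
  | algebraMap r =>
    intro m hm
    rw [Algebra.algebraMap_eq_smul_one, smul_mul_assoc, one_mul]
    exact M.smul_mem r hm
  | add _ _ _ _ hx hy =>
    intro m hm
    rw [add_mul]
    exact add_mem (hx m hm) (hy m hm)
  | mul _ _ _ _ hx hy =>
    intro m hm
    rw [mul_assoc]
    exact hx _ (hy m hm)

end Basis

theorem stmt11_general (N : ℕ) (q : ℂ) :
    (∀ i : Fin N, gen N q i * gen N q i = 0) ∧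
    (∀ i j : Fin N, i < j → gen N q j * gen N q i = (-q⁻¹) • (gen N q i * gen N q j)) ∧
    Algebra.adjoin ℂ (Set.range (gen N q)) = ⊤ ∧
    LinearIndependent ℂ (basProd N q) ∧
    Submodule.span ℂ (Set.range (basProd N q)) = ⊤ :=
  ⟨gen_mul_self N q, fun _ _ => gen_mul_gen_of_lt q, adjoin_range_gen N q,
    linearIndependent_basProd N q, span_basProd_eq_top N q⟩

theorem stmt11 (N : ℕ) (q : ℂ) (hq : q ≠ 0) (hroot : ∀ n : ℕ, 0 < n → q ^ n ≠ 1) :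
    (∀ i : Fin N, gen N q i * gen N q i = 0) ∧
    (∀ i j : Fin N, i < j → gen N q j * gen N q i = (-q⁻¹) • (gen N q i * gen N q j)) ∧
    Algebra.adjoin ℂ (Set.range (gen N q)) = ⊤ ∧
    LinearIndependent ℂ (basProd N q) ∧
    Submodule.span ℂ (Set.range (basProd N q)) = ⊤ :=
  stmt11_general N q
end
end
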